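/- Let D ⊆ ℂ be a domain, z₀ ∈ D, and f : D → ℂ analytic. If the natural extension f* is constant on the halo hal(z₀), then f is constant on all of D. -/

import Mathlib

open Filter

/-- The hypercomplex numbers: the ultrapower of `ℂ` along the hyperfilter on `ℕ`. -/
abbrev Hypercomplex : Type := Filter.Germ (Filter.hyperfilter ℕ : Filter ℕ) ℂ

namespace Hypercomplex

/-- Real part, a hyperreal. -/
noncomputable def re (z : Hypercomplex) : Hyperreal := z.map Complex.re

/-- Imaginary part, a hyperreal. -/
noncomputable def im (z : Hypercomplex) : Hyperreal := z.map Complex.im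

/-- Inclusion of the complex numbers. -/
noncomputable def ofC (w : ℂ) : Hypercomplex := (↑w : Hypercomplex)

/-- A hypercomplex number is limited if both parts are not infinite. -/
def Limited (z : Hypercomplex) : Prop := ¬ z.re.Infinite ∧ ¬ z.im.Infinite

/-- Infinitesimal closeness: both parts of the difference are infinitesimal. -/
def InfClose (z w : Hypercomplex) : Prop :=
  ((z - w).re).Infinitesimal ∧ ((z - w).im).Infinitesimal

/-- The shadow (standard part) of a hypercomplex number. -/
noncomputable def sh (z : Hypercomplex) : ℂ := ⟨z.re.st, z.im.st⟩

end Hypercomplex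

/-- The natural extension of `f : ℂ → ℂ` to the hypercomplex numbers. -/
noncomputable def starFunCC (f : ℂ → ℂ) : Hypercomplex → Hypercomplex :=
  fun z => Filter.Germ.map f z

/-! If `f` were not equal to `f z₀` near `z₀`, there would be a sequence `xₙ → z₀` with
`f xₙ ≠ f z₀` for every `n`. Its class in the ultrapower lies in the halo of `z₀`, yet `f*` differs
there from `f*(z₀) = f z₀`. So `f = f z₀` near `z₀`, and the identity theorem spreads this over the
connected domain. -/

open Topology

namespace Hypercomplex

theorem infClose_self (z : Hypercomplex) : InfClose z z := by
  simp only [InfClose, sub_self]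
  exact ⟨Hyperreal.infinitesimal_zero, Hyperreal.infinitesimal_zero⟩

theorem infClose_of_tendsto {x : ℕ → ℂ} {w : ℂ} (hx : Tendsto x atTop (𝓝 w)) :
    InfClose (x : Hypercomplex) (ofC w) := by
  have hsub : Tendsto (fun n => x n - w) atTop (𝓝 0) := by
    simpa using hx.sub_const w
  exact ⟨Hyperreal.infinitesimal_of_tendsto_zero
      (by simpa using (Complex.continuous_re.tendsto 0).comp hsub),
    Hyperreal.infinitesimal_of_tendsto_zero
      (by simpa using (Complex.continuous_im.tendsto 0).comp hsub)⟩

end Hypercomplex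

open Hypercomplex in
theorem eventually_eq_of_starFunCC_eq_on_halo {f : ℂ → ℂ} {z₀ : ℂ}
    (h : ∀ z, InfClose z (ofC z₀) → starFunCC f z = starFunCC f (ofC z₀)) :
    ∀ᶠ z in 𝓝 z₀, f z = f z₀ := by
  by_contra hne
  obtain ⟨x, hx, hxne⟩ := exists_seq_forall_of_frequently (not_eventually.mp hne)
  obtain ⟨n, hn⟩ := (Germ.coe_eq.mp (h x (infClose_of_tendsto hx))).exists
  exact hxne n hn

open Hypercomplex in
theorem analytic_constant_of_constant_on_halo_general (D : Set ℂ)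
    (hconn : IsPreconnected D) (z₀ : ℂ) (hz₀ : z₀ ∈ D)
    (f : ℂ → ℂ) (hf : AnalyticOnNhd ℂ f D)
    (h : ∀ z w : Hypercomplex, InfClose z (ofC z₀) → InfClose w (ofC z₀) →
      starFunCC f z = starFunCC f w) :
    ∀ z ∈ D, f z = f z₀ := by
  have hev : ∀ᶠ z in 𝓝 z₀, f z = f z₀ :=
    eventually_eq_of_starFunCC_eq_on_halo fun z hz => h z _ hz (infClose_self _)
  exact fun z hz =>
    hf.eqOn_of_preconnected_of_eventuallyEq analyticOnNhd_const hconn hz₀ hev hz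

open Hypercomplex in
/-- an analytic function on a domain whose natural extension is
constant on the halo of some point of the domain is constant on the whole
domain. -/
theorem analytic_constant_of_constant_on_halo (D : Set ℂ) (hD : IsOpen D)
    (hconn : IsPreconnected D) (z₀ : ℂ) (hz₀ : z₀ ∈ D)
    (f : ℂ → ℂ) (hf : AnalyticOnNhd ℂ f D)
    (h : ∀ z w : Hypercomplex, InfClose z (ofC z₀) → InfClose w (ofC z₀) →
      starFunCC f z = starFunCC f w) :
    ∀ z ∈ D, f z = f z₀ :=
  analytic_constant_of_constant_on_halo_general D hconn z₀ hz₀ f hf h
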